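/- For m ≥ 5, let H = K_{m,m} \ E(C_{2m}) and W a resolving set of H. If A and B are two distinct gaps of W each containing exactly three vertices, then the middle vertices of A and B lie in different parts of the bipartition of H. -/

import Mathlib

/-!
The middle vertex of a gap of three vertices lies outside `W`, and so do its two cycle
neighbours. In `K_{m,m}` minus the cycle a vertex is adjacent to every vertex of the other part
except its two cycle neighbours, and for `m ≥ 5` any two vertices of the same part have a common
neighbour. So the middle vertex is at distance `1` from the vertices of `W` in the other part and
at distance `2` from those in its own part: its distance vector to `W` depends only on its part,
and two distinct middles in the same part would not be resolved.
-/

/-- `W` resolves `G`: every vertex is determined by its distance vector to `W`. -/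
def Resolves {V : Type*} (G : SimpleGraph V) (W : Set V) : Prop :=
  ∀ u v : V, (∀ w ∈ W, G.dist u w = G.dist v w) → u = v

/-- Metric dimension: minimum cardinality of a (finite) resolving set. -/
noncomputable def metricDim {V : Type*} (G : SimpleGraph V) : ℕ :=
  sInf {k | ∃ W : Set V, W.Finite ∧ W.ncard = k ∧ Resolves G W}
/-- `K_{m,m}` minus the Hamiltonian cycle `x₁ y₁ x₂ y₂ … x_m y_m x₁` (0-indexed:
cycle edges are `xᵢ yᵢ` and `yᵢ x_{i+1 mod m}`). -/
def cycGraph (m : ℕ) : SimpleGraph (Fin m ⊕ Fin m) where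
  Adj u v := match u, v with
    | Sum.inl i, Sum.inr j => j ≠ i ∧ (i : ℕ) ≠ ((j : ℕ) + 1) % m
    | Sum.inr j, Sum.inl i => j ≠ i ∧ (i : ℕ) ≠ ((j : ℕ) + 1) % m
    | _, _ => False
  symm := ⟨by rintro (i|i) (j|j) h <;> exact h⟩
  loopless := ⟨by rintro (i|i) h <;> exact h⟩

/-- Position `k` (taken mod `2m`) along the Hamiltonian cycle
`x₁ y₁ x₂ y₂ …`: even positions `2i ↦ xᵢ`, odd positions `2i+1 ↦ yᵢ`. -/
def cyc (m : ℕ) [NeZero m] (k : ℕ) : Fin m ⊕ Fin m :=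
  if (k % (2 * m)) % 2 = 0 then
    Sum.inl ⟨k % (2 * m) / 2, by
      have hm : 0 < m := Nat.pos_of_ne_zero (NeZero.ne m)
      have h : k % (2 * m) < 2 * m := Nat.mod_lt _ (by omega)
      exact Nat.div_lt_of_lt_mul (by omega)⟩
  else
    Sum.inr ⟨k % (2 * m) / 2, by
      have hm : 0 < m := Nat.pos_of_ne_zero (NeZero.ne m)
      have h : k % (2 * m) < 2 * m := Nat.mod_lt _ (by omega)
      exact Nat.div_lt_of_lt_mul (by omega)⟩

/-- `W` has a gap of exactly `L` vertices starting at cycle position `s`: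
the positions `s` and `s+L+1` are in `W` and the `L` positions strictly between are not. -/
def IsGap (m : ℕ) [NeZero m] (W : Set (Fin m ⊕ Fin m)) (s L : ℕ) : Prop :=
  cyc m s ∈ W ∧ cyc m (s + L + 1) ∈ W ∧ ∀ t, 1 ≤ t → t ≤ L → cyc m (s + t) ∉ W

section

variable {m : ℕ} [NeZero m]

namespace cycGraph

/-- The successor along the removed Hamiltonian cycle: `xᵢ ↦ yᵢ ↦ x_{i+1}`. -/
def succ : Fin m ⊕ Fin m → Fin m ⊕ Fin m :=
  Sum.elim Sum.inr fun i => Sum.inl (i + 1)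

lemma succ_injective : Function.Injective (succ : Fin m ⊕ Fin m → Fin m ⊕ Fin m) := by
  rintro (i | i) (j | j) h <;> simp_all [succ]

lemma adj_iff {u v : Fin m ⊕ Fin m} :
    (cycGraph m).Adj u v ↔ u.isLeft ≠ v.isLeft ∧ v ≠ succ u ∧ u ≠ succ v := by
  have hsucc (i j : Fin m) : i ≠ ((j : ℕ) + 1) % m ↔ i ≠ j + 1 := by
    simp [Fin.ext_iff, Fin.val_add]
  rcases u with i | i <;> rcases v with j | j <;>
    simp [cycGraph, succ, hsucc, and_comm, eq_comm]

lemma exists_adj_adj_of_isLeft_eq (hm : 5 ≤ m) {u v : Fin m ⊕ Fin m}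
    (h : u.isLeft = v.isLeft) : ∃ w, (cycGraph m).Adj u w ∧ (cycGraph m).Adj w v := by
  have avoid (a b c d : Fin m) : ∃ k, k ∉ ({a, b, c, d} : Finset (Fin m)) := by
    have hcard : ({a, b, c, d} : Finset (Fin m)).card < (Finset.univ : Finset (Fin m)).card :=
      Finset.card_le_four.trans_lt (by simp only [Finset.card_univ, Fintype.card_fin]; omega)
    obtain ⟨k, -, hk⟩ := Finset.exists_mem_notMem_of_card_lt_card hcard
    exact ⟨k, hk⟩
  rcases u with i | i <;> rcases v with j | j <;> simp only [Sum.isLeft, reduceCtorEq] at h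
  · obtain ⟨k, hk⟩ := avoid i j (i - 1) (j - 1)
    simp only [Finset.mem_insert, Finset.mem_singleton, not_or, eq_sub_iff_add_eq] at hk
    refine ⟨Sum.inr k, ?_, ?_⟩ <;> simp_all [adj_iff, succ, eq_comm]
  · obtain ⟨k, hk⟩ := avoid i j (i + 1) (j + 1)
    refine ⟨Sum.inl k, ?_, ?_⟩ <;> simp_all [adj_iff, succ, eq_comm]

lemma dist_eq_two_of_isLeft_eq (hm : 5 ≤ m) {u v : Fin m ⊕ Fin m} (hne : u ≠ v)
    (h : u.isLeft = v.isLeft) : (cycGraph m).dist u v = 2 := by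
  obtain ⟨w, huw, hwv⟩ := exists_adj_adj_of_isLeft_eq hm h
  have hedist : (cycGraph m).edist u v = 2 :=
    SimpleGraph.edist_eq_two_iff.mpr
      ⟨hne, fun hadj => (adj_iff.mp hadj).1 h, w, huw, hwv.symm⟩
  simp [SimpleGraph.dist, hedist]

lemma dist_eq_ite (hm : 5 ≤ m) {v w : Fin m ⊕ Fin m} (hne : w ≠ v) (hsucc : w ≠ succ v)
    (hpred : v ≠ succ w) : (cycGraph m).dist v w = if v.isLeft = w.isLeft then 2 else 1 := by
  split_ifs with h
  · exact dist_eq_two_of_isLeft_eq hm hne.symm h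
  · exact SimpleGraph.dist_eq_one_iff_adj.mpr (adj_iff.mpr ⟨h, hsucc, hpred⟩)

end cycGraph

lemma cyc_eq_inl_iff (k : ℕ) (i : Fin m) : cyc m k = Sum.inl i ↔ k % (2 * m) = 2 * i := by
  unfold cyc
  split_ifs <;> simp only [Sum.inl.injEq, Fin.ext_iff, false_iff] <;> omega

lemma cyc_eq_inr_iff (k : ℕ) (i : Fin m) :
    cyc m k = Sum.inr i ↔ k % (2 * m) = 2 * i + 1 := by
  unfold cyc
  split_ifs <;> simp only [Sum.inr.injEq, Fin.ext_iff, false_iff] <;> omega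

lemma cyc_add_one (k : ℕ) : cyc m (k + 1) = cycGraph.succ (cyc m k) := by
  have hsucc : (k + 1) % (2 * m) = (k % (2 * m) + 1) % (2 * m) := (Nat.mod_add_mod k _ 1).symm
  rcases hk : cyc m k with i | i
  · rw [cyc_eq_inl_iff] at hk
    rw [cycGraph.succ, Sum.elim_inl, cyc_eq_inr_iff, hsucc, hk, Nat.mod_eq_of_lt (by omega)]
  · rw [cyc_eq_inr_iff] at hk
    rw [cycGraph.succ, Sum.elim_inr, cyc_eq_inl_iff, hsucc, hk, Fin.val_add, Fin.val_one',
      Nat.add_mod_mod, ← Nat.mul_mod_mul_left, mul_add, mul_one, add_assoc]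

lemma modEq_of_cyc_eq {a b : ℕ} (h : cyc m a = cyc m b) : a ≡ b [MOD 2 * m] := by
  rcases hb : cyc m b with i | i
  · rw [hb, cyc_eq_inl_iff] at h
    exact h.trans ((cyc_eq_inl_iff b i).mp hb).symm
  · rw [hb, cyc_eq_inr_iff] at h
    exact h.trans ((cyc_eq_inr_iff b i).mp hb).symm

lemma IsGap.dist_middle (hm : 5 ≤ m) {W : Set (Fin m ⊕ Fin m)} {s : ℕ} {w : Fin m ⊕ Fin m}
    (h : IsGap m W s 3) (hw : w ∈ W) :
    (cycGraph m).dist (cyc m (s + 2)) w = if (cyc m (s + 2)).isLeft = w.isLeft then 2 else 1 := by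
  have hout (t : ℕ) (h1 : 1 ≤ t) (h3 : t ≤ 3) : w ≠ cyc m (s + t) :=
    fun hwt => h.2.2 t h1 h3 (hwt ▸ hw)
  refine cycGraph.dist_eq_ite hm (hout 2 (by norm_num) (by norm_num)) ?_ ?_
  · rw [← cyc_add_one]
    exact hout 3 (by norm_num) le_rfl
  · rw [cyc_add_one (s + 1)]
    exact cycGraph.succ_injective.ne (hout 1 le_rfl (by norm_num)).symm

end

/-- for `m ≥ 5`, any two distinct gaps of three vertices of a
resolving set of `K_{m,m} \ E(C_{2m})` have their middle vertices in different
parts of the bipartition. -/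
theorem stmt11 (m : ℕ) [NeZero m] (hm : 5 ≤ m) (W : Set (Fin m ⊕ Fin m))
    (hW : Resolves (cycGraph m) W) (s₁ s₂ : ℕ)
    (h₁ : IsGap m W s₁ 3) (h₂ : IsGap m W s₂ 3)
    (hne : s₁ % (2 * m) ≠ s₂ % (2 * m)) :
    (cyc m (s₁ + 2)).isLeft ≠ (cyc m (s₂ + 2)).isLeft := by
  intro hside
  have hmid : cyc m (s₁ + 2) = cyc m (s₂ + 2) := hW _ _ fun w hw => by
    rw [h₁.dist_middle hm hw, h₂.dist_middle hm hw, hside]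
  exact hne (Nat.ModEq.add_right_cancel' 2 (modEq_of_cyc_eq hmid))
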